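/- arXiv:2312.04026 — 2 statements merged into one kernel-verified Lean document; each statement's English description precedes it below -/
import Mathlib

section
/- Let n ≥ 2 be an even integer, and for each i ∈ {1,…,n} let Y_i : {0,1} × [0,1] → ℝ be a fixed potential-outcome function that is L-Lipschitz in its second argument, i.e. |Y_i(z, ρ) − Y_i(z, ρ′)| ≤ L·|ρ − ρ′| for all z ∈ {0,1} and ρ, ρ′ ∈ [0,1]. Fix ρ ∈ [0,1] and interference levels ρ_1,…,ρ_n ∈ [0,1], and let Z = (Z_1,…,Z_n) be uniformly distributed over all vectors in {0,1}^n with exactly n/2 coordinates equal to 1. Define τ̂ = (2/n)·Σ_i Y_i(Z_i, ρ_i)·Z_i − (2/n)·Σ_i Y_i(Z_i, ρ_i)·(1 − Z_i), let a_i = Y_i(1, ρ) + Y_i(0, ρ) with mean ā = n^{−1}Σ_i a_i and sample variance S[a] = (n−1)^{−1}Σ_i (a_i − ā)², let Y_max = max_i |a_i − ā|, and let Δ₁ = Σ_i |ρ_i − ρ|. Then |Var[τ̂] − (1/n)·S[a]| ≤ (4/(n(n−1)))·(L·Y_max·Δ₁ + L²·Δ₁²). -/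
/-!
Write `dᵢ = Yᵢ(1, ρᵢ) + Yᵢ(0, ρᵢ)`. Unit by unit, `τ̂ = (2/n) Σ dᵢ Zᵢ + const`, a linear statistic
of the assignment. Under simple random sampling of `m` out of `n` units the treatment indicators
are exchangeable and sum to `m`, which forces `Var (Σ dᵢ Zᵢ) = m (n - m) / (n (n - 1)) · Σ (dᵢ - d̄)²`;
for `m = n/2` this gives `Var τ̂ = S[d] / n` exactly. What remains is to compare the sample
variances of `d` and `a`: with `e = d - a`,
`Σ (dᵢ - d̄)² - Σ (aᵢ - ā)² = 2 Σ (aᵢ - ā) eᵢ + Σ (eᵢ - ē)²`, which is at most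
`2 Y_max ‖e‖₁ + ‖e‖₁²` in absolute value, and the Lipschitz bound gives `‖e‖₁ ≤ 2 L Δ₁`.
-/

open Finset

/-- The completely randomized design: the set of binary assignment vectors on `n` units
with exactly `n/2` treated. -/
def crdSet (n : ℕ) : Finset (Fin n → Bool) :=
  Finset.univ.filter fun z => (Finset.univ.filter fun i => z i = true).card = n / 2

/-- Expectation of `f` under the uniform distribution on `crdSet n`. -/
noncomputable def crdExp (n : ℕ) (f : (Fin n → Bool) → ℝ) : ℝ :=
  (∑ z ∈ crdSet n, f z) / (crdSet n).card

/-- Real-valued treatment indicator. -/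
def ind (b : Bool) : ℝ := if b then 1 else 0

section SumSqDeviation

variable {ι : Type*} (s : Finset ι) (f : ι → ℝ)

theorem sum_sub_mean_sq :
    ∑ i ∈ s, (f i - (∑ k ∈ s, f k) / #s) ^ 2 = ∑ i ∈ s, f i ^ 2 - (∑ i ∈ s, f i) ^ 2 / #s := by
  rcases s.eq_empty_or_nonempty with rfl | hs
  · simp
  have hcard : (#s : ℝ) ≠ 0 := Nat.cast_ne_zero.mpr hs.card_pos.ne'
  simp only [sub_sq, sum_add_distrib, sum_sub_distrib, ← sum_mul, ← mul_sum, sum_const,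
    nsmul_eq_mul]
  field_simp
  ring

theorem sum_const_mul_sub_mean_sq (c : ℝ) :
    ∑ i ∈ s, (c * f i - (∑ k ∈ s, c * f k) / #s) ^ 2 =
      c ^ 2 * ∑ i ∈ s, (f i - (∑ k ∈ s, f k) / #s) ^ 2 := by
  rw [← mul_sum, mul_sum s _ (c ^ 2)]
  exact sum_congr rfl fun i _ => by ring

theorem sum_sub_mean_sq_eq_add (a d : ι → ℝ) :
    ∑ i ∈ s, (d i - (∑ k ∈ s, d k) / #s) ^ 2 =
      ∑ i ∈ s, (a i - (∑ k ∈ s, a k) / #s) ^ 2 +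
        2 * ∑ i ∈ s, (a i - (∑ k ∈ s, a k) / #s) * (d i - a i) +
          ∑ i ∈ s, (d i - a i - (∑ k ∈ s, (d k - a k)) / #s) ^ 2 := by
  rw [sum_sub_mean_sq, sum_sub_mean_sq, sum_sub_mean_sq]
  simp only [sub_mul, mul_sub, sub_sq, mul_assoc, ← sq, sum_sub_distrib, sum_add_distrib,
    ← mul_sum, mul_comm (d _) (a _)]
  ring

theorem abs_sum_sub_mean_sq_sub_sum_sub_mean_sq_le (a d : ι → ℝ) {M : ℝ}
    (hM : ∀ i ∈ s, |a i - (∑ k ∈ s, a k) / #s| ≤ M) :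
    |∑ i ∈ s, (d i - (∑ k ∈ s, d k) / #s) ^ 2 - ∑ i ∈ s, (a i - (∑ k ∈ s, a k) / #s) ^ 2| ≤
      2 * M * ∑ i ∈ s, |d i - a i| + (∑ i ∈ s, |d i - a i|) ^ 2 := by
  have hcross : |∑ i ∈ s, (a i - (∑ k ∈ s, a k) / #s) * (d i - a i)| ≤
      M * ∑ i ∈ s, |d i - a i| := by
    rw [mul_sum]
    refine (abs_sum_le_sum_abs _ _).trans (sum_le_sum fun i hi => ?_)
    rw [abs_mul]
    exact mul_le_mul_of_nonneg_right (hM i hi) (abs_nonneg _)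
  have hdev_nonneg : 0 ≤ ∑ i ∈ s, (d i - a i - (∑ k ∈ s, (d k - a k)) / #s) ^ 2 :=
    sum_nonneg fun i _ => sq_nonneg _
  have hdev_le : ∑ i ∈ s, (d i - a i - (∑ k ∈ s, (d k - a k)) / #s) ^ 2 ≤
      (∑ i ∈ s, |d i - a i|) ^ 2 :=
    calc _ = ∑ i ∈ s, (d i - a i) ^ 2 - (∑ i ∈ s, (d i - a i)) ^ 2 / #s :=
          sum_sub_mean_sq s fun i => d i - a i
      _ ≤ ∑ i ∈ s, |d i - a i| ^ 2 := by simp only [sq_abs]; exact sub_le_self _ (by positivity)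
      _ ≤ (∑ i ∈ s, |d i - a i|) ^ 2 := sum_sq_le_sq_sum_of_nonneg fun i _ => abs_nonneg _
  rw [sum_sub_mean_sq_eq_add s a d, add_assoc, add_sub_cancel_left]
  calc _ ≤ |2 * ∑ i ∈ s, (a i - (∑ k ∈ s, a k) / #s) * (d i - a i)| +
          |∑ i ∈ s, (d i - a i - (∑ k ∈ s, (d k - a k)) / #s) ^ 2| := abs_add_le _ _
    _ ≤ 2 * (M * ∑ i ∈ s, |d i - a i|) + (∑ i ∈ s, |d i - a i|) ^ 2 := by
        rw [abs_mul, abs_two, abs_of_nonneg hdev_nonneg]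
        gcongr
    _ = _ := by ring

end SumSqDeviation

def fixedSizeDesign (n m : ℕ) : Finset (Fin n → Bool) :=
  univ.filter fun z => #(univ.filter fun i => z i = true) = m

noncomputable def designExp (n m : ℕ) (f : (Fin n → Bool) → ℝ) : ℝ :=
  (∑ z ∈ fixedSizeDesign n m, f z) / #(fixedSizeDesign n m)

theorem crdExp_eq_designExp (n : ℕ) : crdExp n = designExp n (n / 2) := rfl

namespace fixedSizeDesign

variable {n m : ℕ}

theorem comp_perm_mem (σ : Equiv.Perm (Fin n)) {z : Fin n → Bool}
    (hz : z ∈ fixedSizeDesign n m) : z ∘ σ ∈ fixedSizeDesign n m := by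
  simp only [fixedSizeDesign, mem_filter, mem_univ, true_and, card_filter] at hz ⊢
  rw [← hz]
  exact Equiv.sum_comp σ fun i => if z i = true then 1 else 0

theorem sum_comp_perm {β : Type*} [AddCommMonoid β] (σ : Equiv.Perm (Fin n))
    (f : (Fin n → Bool) → β) :
    ∑ z ∈ fixedSizeDesign n m, f (z ∘ σ) = ∑ z ∈ fixedSizeDesign n m, f z :=
  sum_nbij' (· ∘ σ) (· ∘ σ.symm) (fun _ hz => comp_perm_mem σ hz)
    (fun _ hz => comp_perm_mem σ.symm hz) (fun z _ => by ext; simp)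
    (fun z _ => by ext; simp) fun _ _ => rfl

theorem nonempty (hm : m ≤ n) : (fixedSizeDesign n m).Nonempty :=
  ⟨fun i => decide ((i : ℕ) < m), by
    simp [fixedSizeDesign, Fin.card_filter_val_lt, hm]⟩

theorem sum_ind_of_mem {z : Fin n → Bool} (hz : z ∈ fixedSizeDesign n m) :
    ∑ i, ind (z i) = m := by
  simp only [fixedSizeDesign, mem_filter, mem_univ, true_and] at hz
  simp only [ind, ← hz, card_filter, Nat.cast_sum, Nat.cast_ite, Nat.cast_one, Nat.cast_zero]

theorem sum_ind (i : Fin n) :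
    ∑ z ∈ fixedSizeDesign n m, ind (z i) = #(fixedSizeDesign n m) * m / n := by
  have hn : (n : ℝ) ≠ 0 := Nat.cast_ne_zero.mpr (Fin.pos i).ne'
  have hconst : ∀ j, ∑ z ∈ fixedSizeDesign n m, ind (z j) =
      ∑ z ∈ fixedSizeDesign n m, ind (z i) := fun j => by
    simpa using sum_comp_perm (m := m) (Equiv.swap i j) fun z => ind (z i)
  have htotal : ∑ j, ∑ z ∈ fixedSizeDesign n m, ind (z j) = #(fixedSizeDesign n m) * m := by
    rw [sum_comm, sum_congr rfl fun z hz => sum_ind_of_mem hz]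
    simp
  simp only [hconst, sum_const, card_univ, Fintype.card_fin, nsmul_eq_mul] at htotal
  field_simp
  linarith

theorem sum_centered_sq (i : Fin n) :
    ∑ z ∈ fixedSizeDesign n m, (ind (z i) - m / n) ^ 2 =
      #(fixedSizeDesign n m) * m * (n - m) / n ^ 2 := by
  have hn : (n : ℝ) ≠ 0 := Nat.cast_ne_zero.mpr (Fin.pos i).ne'
  have hsq : ∀ z : Fin n → Bool, (ind (z i) - m / n) ^ 2 =
      (1 - 2 * m / n) * ind (z i) + (m / n) ^ 2 := fun z => by
    cases z i <;> simp only [ind, Bool.false_eq_true, if_false, if_true] <;> ring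
  simp only [hsq, sum_add_distrib, ← mul_sum, sum_ind, sum_const, nsmul_eq_mul]
  field_simp
  ring

/-- Swapping two units other than `i` shows that the covariances in row `i` off the diagonal are
all equal, and the row sums to zero because every assignment in the design treats `m` units. -/
theorem sum_centered_mul_of_ne {i j : Fin n} (hij : i ≠ j) :
    (n - 1) * ∑ z ∈ fixedSizeDesign n m, (ind (z i) - m / n) * (ind (z j) - m / n) =
      -∑ z ∈ fixedSizeDesign n m, (ind (z i) - m / n) ^ 2 := by
  have hconst : ∀ k ∈ univ.erase i,
      ∑ z ∈ fixedSizeDesign n m, (ind (z i) - m / n) * (ind (z k) - m / n) =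
        ∑ z ∈ fixedSizeDesign n m, (ind (z i) - m / n) * (ind (z j) - m / n) := by
    intro k hk
    have hki := ne_of_mem_erase hk
    simpa [Equiv.swap_apply_of_ne_of_ne hij hki.symm] using
      sum_comp_perm (m := m) (Equiv.swap j k) fun z => (ind (z i) - m / n) * (ind (z j) - m / n)
  have hzero : ∀ z ∈ fixedSizeDesign n m, ∑ k, (ind (z k) - m / n) = 0 := fun z hz => by
    have hn : (n : ℝ) ≠ 0 := Nat.cast_ne_zero.mpr (Fin.pos i).ne'
    simp only [sum_sub_distrib, sum_ind_of_mem hz, sum_const, card_univ, Fintype.card_fin,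
      nsmul_eq_mul]
    field_simp
    ring
  calc (n - 1) * ∑ z ∈ fixedSizeDesign n m, (ind (z i) - m / n) * (ind (z j) - m / n)
      = ∑ k ∈ univ.erase i,
          ∑ z ∈ fixedSizeDesign n m, (ind (z i) - m / n) * (ind (z k) - m / n) := by
        rw [sum_congr rfl hconst, sum_const, card_erase_of_mem (mem_univ i), card_univ,
          Fintype.card_fin, nsmul_eq_mul, Nat.cast_pred (Fin.pos i)]
    _ = ∑ z ∈ fixedSizeDesign n m, (ind (z i) - m / n) *
          (∑ k, (ind (z k) - m / n) - (ind (z i) - m / n)) := by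
        rw [sum_comm]
        refine sum_congr rfl fun z _ => ?_
        rw [← sum_erase_eq_sub (mem_univ i), mul_sum]
    _ = -∑ z ∈ fixedSizeDesign n m, (ind (z i) - m / n) ^ 2 := by
        rw [← sum_neg_distrib]
        refine sum_congr rfl fun z hz => ?_
        rw [hzero z hz]
        ring

theorem sum_centered_mul (i j : Fin n) :
    (n - 1) * ∑ z ∈ fixedSizeDesign n m, (ind (z i) - m / n) * (ind (z j) - m / n) =
      #(fixedSizeDesign n m) * m * (n - m) / n ^ 2 * (n * (if i = j then 1 else 0) - 1) := by
  by_cases hij : i = j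
  · subst hij
    simp only [← sq, sum_centered_sq, if_true]
    ring
  · rw [sum_centered_mul_of_ne hij, sum_centered_sq, if_neg hij]
    ring

theorem sum_sq_sum_mul_centered (d : Fin n → ℝ) :
    (n - 1) * ∑ z ∈ fixedSizeDesign n m, (∑ i, d i * (ind (z i) - m / n)) ^ 2 =
      #(fixedSizeDesign n m) * m * (n - m) / n ^ 2 * (n * ∑ i, d i ^ 2 - (∑ i, d i) ^ 2) := by
  calc (n - 1) * ∑ z ∈ fixedSizeDesign n m, (∑ i, d i * (ind (z i) - m / n)) ^ 2
      = ∑ i, ∑ j, d i * d j * ((n - 1) *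
          ∑ z ∈ fixedSizeDesign n m, (ind (z i) - m / n) * (ind (z j) - m / n)) := by
        simp_rw [sq, sum_mul_sum, mul_sum]
        rw [sum_comm]
        refine sum_congr rfl fun i _ => ?_
        rw [sum_comm]
        exact sum_congr rfl fun j _ => sum_congr rfl fun z _ => by ring
    _ = ∑ i, ∑ j, d i * d j * (#(fixedSizeDesign n m) * m * (n - m) / n ^ 2 *
          (n * (if i = j then 1 else 0) - 1)) := by
        simp only [sum_centered_mul]
    _ = _ := by
        simp only [mul_sub, mul_ite, mul_one, mul_zero, sum_sub_distrib, sum_ite_eq, mem_univ,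
          if_true, ← mul_sum, ← sum_mul]
        rw [sq (∑ i, d i), sum_mul_sum]
        simp only [sq]
        ring

theorem designExp_sq_sub_designExp (hn : 2 ≤ n) (hm : m ≤ n) (d : Fin n → ℝ) (b : ℝ)
    (T : (Fin n → Bool) → ℝ) (hT : ∀ z, T z = ∑ i, d i * ind (z i) + b) :
    designExp n m (fun z => (T z - designExp n m T) ^ 2) =
      m * (n - m) / (n * (n - 1)) * ∑ i, (d i - (∑ k, d k) / n) ^ 2 := by
  have hn0 : (n : ℝ) ≠ 0 := by positivity
  have hn1 : (n : ℝ) - 1 ≠ 0 := by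
    have : (2 : ℝ) ≤ n := by exact_mod_cast hn
    linarith
  have hK : (#(fixedSizeDesign n m) : ℝ) ≠ 0 := Nat.cast_ne_zero.mpr (nonempty hm).card_pos.ne'
  have hmean : designExp n m T = ∑ i, d i * (m / n) + b := by
    simp only [designExp, hT, sum_add_distrib, sum_comm (s := fixedSizeDesign n m), ← mul_sum,
      sum_ind, sum_const, nsmul_eq_mul]
    rw [← sum_mul, ← sum_mul]
    field_simp
  have hcentered : ∀ z, T z - designExp n m T = ∑ i, d i * (ind (z i) - m / n) := fun z => by
    simp only [hT, hmean, mul_sub, sum_sub_distrib]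
    ring
  have hvar : ∑ z ∈ fixedSizeDesign n m, (∑ i, d i * (ind (z i) - m / n)) ^ 2 =
      #(fixedSizeDesign n m) * m * (n - m) / n ^ 2 * (n * ∑ i, d i ^ 2 - (∑ i, d i) ^ 2) /
        (n - 1) := by
    rw [← sum_sq_sum_mul_centered, mul_div_cancel_left₀ _ hn1]
  have hdev := sum_sub_mean_sq univ d
  simp only [card_univ, Fintype.card_fin] at hdev
  simp only [hcentered]
  simp only [designExp, hvar, hdev]
  field_simp

end fixedSizeDesign

theorem crdExp_sq_sub_crdExp {n : ℕ} (hn : 2 ≤ n) (hev : Even n) (d : Fin n → ℝ) (b : ℝ)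
    (T : (Fin n → Bool) → ℝ) (hT : ∀ z, T z = 2 / n * ∑ i, d i * ind (z i) + b) :
    crdExp n (fun z => (T z - crdExp n T) ^ 2) =
      (∑ i, (d i - (∑ k, d k) / n) ^ 2) / (n * (n - 1)) := by
  have hn0 : (n : ℝ) ≠ 0 := by positivity
  have hscaled := sum_const_mul_sub_mean_sq univ d (2 / n)
  simp only [card_univ, Fintype.card_fin] at hscaled
  rw [crdExp_eq_designExp, fixedSizeDesign.designExp_sq_sub_designExp hn (Nat.div_le_self n 2)
    (fun i => 2 / n * d i) b T (fun z => by simp only [hT, mul_sum, mul_assoc]), hscaled,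
    Nat.cast_div_charZero (even_iff_two_dvd.mp hev)]
  field_simp
  ring

theorem sum_abs_sub_le_of_lipschitz {ι : Type*} (s : Finset ι) {Y : ι → Bool → ℝ → ℝ}
    {S : Set ℝ} {L : ℝ}
    (hLip : ∀ i (b : Bool), ∀ x ∈ S, ∀ y ∈ S, |Y i b x - Y i b y| ≤ L * |x - y|)
    {ρ₀ : ℝ} (hρ₀ : ρ₀ ∈ S) {ρ : ι → ℝ} (hρ : ∀ i, ρ i ∈ S) :
    ∑ i ∈ s, |Y i true (ρ i) + Y i false (ρ i) - (Y i true ρ₀ + Y i false ρ₀)| ≤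
      2 * L * ∑ i ∈ s, |ρ i - ρ₀| := by
  rw [mul_sum]
  refine sum_le_sum fun i _ => ?_
  calc _ = |(Y i true (ρ i) - Y i true ρ₀) + (Y i false (ρ i) - Y i false ρ₀)| := by ring_nf
    _ ≤ L * |ρ i - ρ₀| + L * |ρ i - ρ₀| :=
        (abs_add_le _ _).trans
          (add_le_add (hLip i true _ (hρ i) _ hρ₀) (hLip i false _ (hρ i) _ hρ₀))
    _ = 2 * L * |ρ i - ρ₀| := by ring

theorem mul_ind_sub_mul_one_sub_ind (y : Bool → ℝ) (b : Bool) :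
    y b * ind b - y b * (1 - ind b) = (y true + y false) * ind b - y false := by
  cases b <;> simp [ind]

/-- For `n ≥ 2` even, `Yᵢ` `L`-Lipschitz in the interference argument on `[0,1]`,
target level `ρ₀ ∈ [0,1]`, interference levels `ρᵢ ∈ [0,1]`, completely randomized design `Z`,
difference-in-means estimator `τ̂`, `aᵢ = Yᵢ(1,ρ₀) + Yᵢ(0,ρ₀)` with mean `ā`, sample variance
`S[a] = (n-1)⁻¹ Σᵢ (aᵢ-ā)²`, `Y_max = maxᵢ |aᵢ - ā|`, and `Δ₁ = Σᵢ |ρᵢ - ρ₀|`: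
`|Var[τ̂] - (1/n)·S[a]| ≤ (4/(n(n-1)))·(L·Y_max·Δ₁ + L²·Δ₁²)`. -/
theorem stmt_9 (n : ℕ) (hn : 2 ≤ n) (hev : Even n)
    (Y : Fin n → Bool → ℝ → ℝ) (L : ℝ)
    (hLip : ∀ i (b : Bool), ∀ ρ₁ ∈ Set.Icc (0 : ℝ) 1, ∀ ρ₂ ∈ Set.Icc (0 : ℝ) 1,
      |Y i b ρ₁ - Y i b ρ₂| ≤ L * |ρ₁ - ρ₂|)
    (ρ₀ : ℝ) (hρ₀ : ρ₀ ∈ Set.Icc (0 : ℝ) 1)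
    (ρ : Fin n → ℝ) (hρ : ∀ i, ρ i ∈ Set.Icc (0 : ℝ) 1)
    (τhat : (Fin n → Bool) → ℝ)
    (hτ : ∀ z, τhat z = (2 / n) * (∑ i, Y i (z i) (ρ i) * ind (z i))
                      - (2 / n) * (∑ i, Y i (z i) (ρ i) * (1 - ind (z i))))
    (a : Fin n → ℝ) (ha : ∀ i, a i = Y i true ρ₀ + Y i false ρ₀)
    (Ymax : ℝ) (hYmax : IsGreatest (Set.range fun i => |a i - (∑ k, a k) / n|) Ymax)
    (Δ₁ : ℝ) (hΔ₁ : Δ₁ = ∑ i, |ρ i - ρ₀|) :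
    |crdExp n (fun z => (τhat z - crdExp n τhat) ^ 2)
        - (1 / n) * ((∑ i, (a i - (∑ k, a k) / n) ^ 2) / ((n : ℝ) - 1))|
      ≤ (4 / (n * ((n : ℝ) - 1))) * (L * Ymax * Δ₁ + L ^ 2 * Δ₁ ^ 2) := by
  set d : Fin n → ℝ := fun i => Y i true (ρ i) + Y i false (ρ i)
  have hτlin : ∀ z, τhat z = 2 / n * ∑ i, d i * ind (z i) + -(2 / n * ∑ i, Y i false (ρ i)) :=
    fun z => by
      rw [hτ, ← mul_sub, ← sum_sub_distrib, sum_congr rfl fun i _ =>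
        mul_ind_sub_mul_one_sub_ind (fun b => Y i b (ρ i)) (z i), sum_sub_distrib]
      ring
  have hdist : ∑ i, |d i - a i| ≤ 2 * L * Δ₁ := by
    simpa only [ha, hΔ₁] using sum_abs_sub_le_of_lipschitz univ hLip hρ₀ hρ
  have hpert := abs_sum_sub_mean_sq_sub_sum_sub_mean_sq_le univ a d
    (M := Ymax) fun i _ => by simpa using hYmax.2 ⟨i, rfl⟩
  simp only [card_univ, Fintype.card_fin] at hpert
  have hYmax_nonneg : 0 ≤ Ymax := (abs_nonneg _).trans (hYmax.2 ⟨⟨0, by omega⟩, rfl⟩)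
  have hdist_nonneg : 0 ≤ ∑ i, |d i - a i| := sum_nonneg fun i _ => abs_nonneg _
  have hpos : (0 : ℝ) < n * (n - 1) := by
    have : (2 : ℝ) ≤ n := by exact_mod_cast hn
    exact mul_pos (by linarith) (by linarith)
  rw [crdExp_sq_sub_crdExp hn hev d _ τhat hτlin, one_div_mul_eq_div, div_div,
    mul_comm ((n : ℝ) - 1), ← sub_div, abs_div, abs_of_pos hpos, div_mul_eq_mul_div,
    div_le_div_iff_of_pos_right hpos]
  calc _ ≤ 2 * Ymax * ∑ i, |d i - a i| + (∑ i, |d i - a i|) ^ 2 := hpert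
    _ ≤ 2 * Ymax * (2 * L * Δ₁) + (2 * L * Δ₁) ^ 2 := by gcongr
    _ = _ := by ring
end

section
/- Let n ≥ 3, let Z = (Z_1,…,Z_n) and ρ = (ρ_1,…,ρ_n) be fixed real vectors with population variances V[Z] > 0, V[ρ] > 0 and population covariance C[Z,ρ] satisfying C[Z,ρ]² < V[Z]·V[ρ]. Let ε_1,…,ε_n be square-integrable real random variables with 𝔼[ε_i] = 0, Var[ε_i] = σ², and Cov[ε_i, ε_j] = 0 for i ≠ j, and let Y = α·1 + β·Z + γ·ρ + ε for fixed real numbers α, β, γ. Let (α̂, β̂, γ̂)ᵀ = (XᵀX)^{−1}XᵀY, where X is the n×3 matrix with columns (1,…,1)ᵀ, Z, ρ. Then Var[β̂ + γ̂] ≥ σ² / (n·V[ρ]). -/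
/-!
Since `det (XᵀX) = n³ (V[Z] V[ρ] - C[Z,ρ]²) ≠ 0`, the matrix `L = (XᵀX)⁻¹Xᵀ` is a left inverse
of `X`, so `β̂ + γ̂ = β + γ + w ⬝ᵥ ε` with `w = (0,1,1) L`, and uncorrelatedness gives
`Var[β̂ + γ̂] = σ² ‖w‖²`. Because `L X = 1`, `w` pairs with the column `X (-ρ̄, 0, 1) = ρ - ρ̄` to
`(0,1,1) ⬝ᵥ (-ρ̄, 0, 1) = 1`, and Cauchy–Schwarz gives `1 ≤ ‖w‖² ‖ρ - ρ̄‖² = ‖w‖² n V[ρ]`.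
-/

open MeasureTheory Matrix Finset

section Uncorrelated

variable {Ω ι : Type*} [MeasurableSpace Ω] {μ : Measure Ω} [Fintype ι] {ε : ι → Ω → ℝ}

lemma integral_sum_mul_sq_of_uncorrelated (hε : ∀ i, MemLp (ε i) 2 μ) {s : ℝ}
    (hdiag : ∀ i, ∫ ω, ε i ω ^ 2 ∂μ = s)
    (hoff : ∀ i j, i ≠ j → ∫ ω, ε i ω * ε j ω ∂μ = 0) (w : ι → ℝ) :
    ∫ ω, (∑ i, w i * ε i ω) ^ 2 ∂μ = (∑ i, w i ^ 2) * s := by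
  classical
  have hcorr : ∀ i j, ∫ ω, ε i ω * ε j ω ∂μ = if i = j then s else 0 := by
    intro i j
    split_ifs with h
    · subst h; simpa only [sq] using hdiag i
    · exact hoff i j h
  have hint : ∀ i j, Integrable (fun ω => w i * w j * (ε i ω * ε j ω)) μ :=
    fun i j => ((hε i).integrable_mul (hε j)).const_mul _
  calc ∫ ω, (∑ i, w i * ε i ω) ^ 2 ∂μ
      = ∫ ω, ∑ i, ∑ j, w i * w j * (ε i ω * ε j ω) ∂μ := by
        congr with ω; rw [sq, sum_mul_sum]; simp only [mul_mul_mul_comm]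
    _ = ∑ i, ∑ j, w i * w j * ∫ ω, ε i ω * ε j ω ∂μ := by
        rw [integral_finsetSum _ fun i _ => integrable_finsetSum _ fun j _ => hint i j]
        simp only [integral_finsetSum _ fun j _ => hint _ j, integral_const_mul]
    _ = (∑ i, w i ^ 2) * s := by
        simp [hcorr, sum_mul, sq]

lemma integral_sq_sub_integral_of_uncorrelated [IsProbabilityMeasure μ]
    (hε : ∀ i, MemLp (ε i) 2 μ) (hmean : ∀ i, ∫ ω, ε i ω ∂μ = 0) {s : ℝ}
    (hdiag : ∀ i, ∫ ω, ε i ω ^ 2 ∂μ = s)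
    (hoff : ∀ i j, i ≠ j → ∫ ω, ε i ω * ε j ω ∂μ = 0) (c : ℝ) (w : ι → ℝ) :
    ∫ ω, (c + ∑ i, w i * ε i ω - ∫ ω', (c + ∑ i, w i * ε i ω') ∂μ) ^ 2 ∂μ
      = (∑ i, w i ^ 2) * s := by
  have hint : ∀ i, Integrable (fun ω => w i * ε i ω) μ :=
    fun i => ((hε i).integrable one_le_two).const_mul _
  have hmean' : ∫ ω, (c + ∑ i, w i * ε i ω) ∂μ = c := by
    rw [integral_add (integrable_const c) (integrable_finsetSum _ fun i _ => hint i),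
      integral_finsetSum _ fun i _ => hint i]
    simp [integral_const_mul, hmean]
  simp only [hmean', add_sub_cancel_left]
  exact integral_sum_mul_sq_of_uncorrelated hε hdiag hoff w

end Uncorrelated

section LeastSquares

variable {R m p : Type*} [CommRing R] [Fintype m] [Fintype p] [DecidableEq p]

lemma inv_gram_mul_transpose_mul_self {X : Matrix m p R} (h : IsUnit (Xᵀ * X).det) :
    (Xᵀ * X)⁻¹ * Xᵀ * X = 1 := by
  rw [Matrix.mul_assoc, nonsing_inv_mul _ h]

lemma inv_gram_mulVec_transpose_mulVec {X : Matrix m p R} (h : IsUnit (Xᵀ * X).det)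
    (θ : p → R) (e : m → R) :
    (Xᵀ * X)⁻¹ *ᵥ (Xᵀ *ᵥ (X *ᵥ θ + e)) = θ + ((Xᵀ * X)⁻¹ * Xᵀ) *ᵥ e := by
  rw [mulVec_mulVec, mulVec_add, mulVec_mulVec, inv_gram_mul_transpose_mul_self h, one_mulVec]

end LeastSquares

lemma dotProduct_sq_le_of_mul_eq_one {m p : Type*} [Fintype m] [Fintype p] [DecidableEq p]
    {L : Matrix p m ℝ} {X : Matrix m p ℝ} (h : L * X = 1) (u c : p → ℝ) :
    (u ⬝ᵥ c) ^ 2 ≤ (∑ i, (u ᵥ* L) i ^ 2) * ∑ i, (X *ᵥ c) i ^ 2 := by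
  have hdot : (u ᵥ* L) ⬝ᵥ (X *ᵥ c) = u ⬝ᵥ c := by
    rw [dotProduct_mulVec, vecMul_vecMul, h, vecMul_one]
  rw [← hdot]
  exact sum_mul_sq_le_sq_mul_sq univ _ _

section Population

variable {ι : Type*} [Fintype ι]

noncomputable def popMean (x : ι → ℝ) : ℝ := (∑ i, x i) / Fintype.card ι

noncomputable def popCov (x y : ι → ℝ) : ℝ :=
  (∑ i, (x i - popMean x) * (y i - popMean y)) / Fintype.card ι

lemma card_pos_of_popCov_self_pos {x : ι → ℝ} (h : 0 < popCov x x) :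
    (0 : ℝ) < Fintype.card ι := by
  rcases (Nat.cast_nonneg (α := ℝ) (Fintype.card ι)).eq_or_lt with h0 | h0
  · simp [popCov, ← h0] at h
  · exact h0

lemma card_mul_popCov (x y : ι → ℝ) :
    Fintype.card ι * popCov x y = ∑ i, (x i - popMean x) * (y i - popMean y) := by
  rcases isEmpty_or_nonempty ι with hι | hι
  · simp
  · rw [popCov]
    field_simp

lemma card_sq_mul_popCov (x y : ι → ℝ) (h : (Fintype.card ι : ℝ) ≠ 0) :
    Fintype.card ι ^ 2 * popCov x y = Fintype.card ι * ∑ i, x i * y i - (∑ i, x i) * ∑ i, y i := by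
  rw [sq, mul_assoc, card_mul_popCov, popMean, popMean]
  simp only [sub_mul, mul_sub, sum_sub_distrib, ← sum_mul, ← mul_sum, sum_const, card_univ,
    nsmul_eq_mul]
  field_simp
  ring

lemma card_mul_det_gram (Z ρ : ι → ℝ) :
    Fintype.card ι * ((of fun i => ![1, Z i, ρ i])ᵀ * of fun i => ![1, Z i, ρ i]).det
      = (Fintype.card ι * ∑ i, Z i * Z i - (∑ i, Z i) * ∑ i, Z i)
          * (Fintype.card ι * ∑ i, ρ i * ρ i - (∑ i, ρ i) * ∑ i, ρ i)
        - (Fintype.card ι * ∑ i, Z i * ρ i - (∑ i, Z i) * ∑ i, ρ i) ^ 2 := by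
  rw [det_fin_three]
  simp only [mul_apply, transpose_apply, of_apply, cons_val_zero, cons_val_one, Matrix.cons_val,
    mul_one, one_mul, sum_const, card_univ, nsmul_eq_mul, mul_comm (ρ _) (Z _)]
  ring

lemma isUnit_det_gram_of_popCov_sq_lt {Z ρ : ι → ℝ}
    (h : popCov Z ρ ^ 2 < popCov Z Z * popCov ρ ρ) :
    IsUnit ((of fun i => ![1, Z i, ρ i])ᵀ * of fun i => ![1, Z i, ρ i]).det := by
  have hcard : (Fintype.card ι : ℝ) ≠ 0 := by
    intro h0
    simp [popCov, h0] at h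
  have hdet : Fintype.card ι * ((of fun i => ![1, Z i, ρ i])ᵀ * of fun i => ![1, Z i, ρ i]).det
      = Fintype.card ι ^ 4 * (popCov Z Z * popCov ρ ρ - popCov Z ρ ^ 2) := by
    rw [card_mul_det_gram, ← card_sq_mul_popCov Z Z hcard, ← card_sq_mul_popCov ρ ρ hcard,
      ← card_sq_mul_popCov Z ρ hcard]
    ring
  exact (right_ne_zero_of_mul
    (hdet ▸ mul_ne_zero (pow_ne_zero 4 hcard) (sub_pos.2 h).ne')).isUnit

end Population

theorem stmt_15_general {Ω : Type*} [MeasurableSpace Ω] (μ : Measure Ω) [IsProbabilityMeasure μ]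
    (n : ℕ) (Z ρ : Fin n → ℝ)
    (VZ Vρ C : ℝ)
    (hVZdef : VZ = (∑ i, (Z i - (∑ k, Z k) / n) ^ 2) / n)
    (hVρdef : Vρ = (∑ i, (ρ i - (∑ k, ρ k) / n) ^ 2) / n)
    (hCdef : C = (∑ i, (Z i - (∑ k, Z k) / n) * (ρ i - (∑ k, ρ k) / n)) / n)
    (hVρ : 0 < Vρ) (hC : C ^ 2 < VZ * Vρ)
    (ε : Fin n → Ω → ℝ) (hsq : ∀ i, MemLp (ε i) 2 μ)
    (hmean : ∀ i, ∫ ω, ε i ω ∂μ = 0)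
    (σ : ℝ) (hvar : ∀ i, ∫ ω, (ε i ω - ∫ ω', ε i ω' ∂μ) ^ 2 ∂μ = σ ^ 2)
    (hcov : ∀ i j, i ≠ j →
      ∫ ω, (ε i ω - ∫ ω', ε i ω' ∂μ) * (ε j ω - ∫ ω', ε j ω' ∂μ) ∂μ = 0)
    (α β γ : ℝ) (Y : Ω → Fin n → ℝ)
    (hY : ∀ ω i, Y ω i = α + β * Z i + γ * ρ i + ε i ω)
    (X : Matrix (Fin n) (Fin 3) ℝ) (hX : X = Matrix.of fun i => ![1, Z i, ρ i])
    (est : Ω → Fin 3 → ℝ) (hest : ∀ ω, est ω = (Xᵀ * X)⁻¹ *ᵥ (Xᵀ *ᵥ Y ω)) :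
    ∫ ω, (est ω 1 + est ω 2 - ∫ ω', (est ω' 1 + est ω' 2) ∂μ) ^ 2 ∂μ
      ≥ σ ^ 2 / (n * Vρ) := by
  obtain ⟨rfl, rfl, rfl⟩ : VZ = popCov Z Z ∧ Vρ = popCov ρ ρ ∧ C = popCov Z ρ := by
    simp [popCov, popMean, hVZdef, hVρdef, hCdef, sq]
  have hdet : IsUnit (Xᵀ * X).det := hX ▸ isUnit_det_gram_of_popCov_sq_lt hC
  set w := ![0, 1, 1] ᵥ* ((Xᵀ * X)⁻¹ * Xᵀ)
  have hsum : ∀ ω, est ω 1 + est ω 2 = β + γ + ∑ i, w i * ε i ω := by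
    intro ω
    have hYω : Y ω = X *ᵥ ![α, β, γ] + fun i => ε i ω := by
      ext i; simp [hY, hX, add_assoc]
    have hdot := congrArg (![0, 1, 1] ⬝ᵥ ·) (hest ω)
    rw [hYω, inv_gram_mulVec_transpose_mulVec hdet, dotProduct_add, dotProduct_mulVec] at hdot
    simpa [dotProduct, Fin.sum_univ_three] using hdot
  have hcs : 1 ≤ (∑ i, w i ^ 2) * (n * popCov ρ ρ) := by
    have hXc : X *ᵥ ![-popMean ρ, 0, 1] = fun i => ρ i - popMean ρ := by
      ext i; simp [hX, neg_add_eq_sub]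
    have hbound := dotProduct_sq_le_of_mul_eq_one (inv_gram_mul_transpose_mul_self hdet)
      ![0, 1, 1] ![-popMean ρ, 0, 1]
    have hcard := card_mul_popCov ρ ρ
    rw [Fintype.card_fin] at hcard
    rw [hcard]
    simpa [hXc, dotProduct, Fin.sum_univ_three, sq, w] using hbound
  have hn : (0 : ℝ) < n := by simpa using card_pos_of_popCov_self_pos hVρ
  simp only [hsum]
  rw [integral_sq_sub_integral_of_uncorrelated hsq hmean (by simpa [hmean] using hvar)
    (by simpa [hmean] using hcov), ge_iff_le, div_le_iff₀ (by positivity)]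
  nlinarith [sq_nonneg σ]

/-- In the setting of STATEMENT 14 (fixed covariates `Z, ρ` with positive
population variances, `C[Z,ρ]² < V[Z]·V[ρ]`, square-integrable uncorrelated mean-zero errors
with variance `σ²`, responses `Y = α·1 + β·Z + γ·ρ + ε`, OLS estimator
`(α̂,β̂,γ̂)ᵀ = (XᵀX)⁻¹XᵀY`), the variance satisfies `Var[β̂ + γ̂] ≥ σ²/(n·V[ρ])`. -/
theorem stmt_15 {Ω : Type*} [MeasurableSpace Ω] (μ : Measure Ω) [IsProbabilityMeasure μ]
    (n : ℕ) (hn : 3 ≤ n) (Z ρ : Fin n → ℝ)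
    (VZ Vρ C : ℝ)
    (hVZdef : VZ = (∑ i, (Z i - (∑ k, Z k) / n) ^ 2) / n)
    (hVρdef : Vρ = (∑ i, (ρ i - (∑ k, ρ k) / n) ^ 2) / n)
    (hCdef : C = (∑ i, (Z i - (∑ k, Z k) / n) * (ρ i - (∑ k, ρ k) / n)) / n)
    (hVZ : 0 < VZ) (hVρ : 0 < Vρ) (hC : C ^ 2 < VZ * Vρ)
    (ε : Fin n → Ω → ℝ) (hsq : ∀ i, MemLp (ε i) 2 μ)
    (hmean : ∀ i, ∫ ω, ε i ω ∂μ = 0)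
    (σ : ℝ) (hvar : ∀ i, ∫ ω, (ε i ω - ∫ ω', ε i ω' ∂μ) ^ 2 ∂μ = σ ^ 2)
    (hcov : ∀ i j, i ≠ j →
      ∫ ω, (ε i ω - ∫ ω', ε i ω' ∂μ) * (ε j ω - ∫ ω', ε j ω' ∂μ) ∂μ = 0)
    (α β γ : ℝ) (Y : Ω → Fin n → ℝ)
    (hY : ∀ ω i, Y ω i = α + β * Z i + γ * ρ i + ε i ω)
    (X : Matrix (Fin n) (Fin 3) ℝ) (hX : X = Matrix.of fun i => ![1, Z i, ρ i])
    (est : Ω → Fin 3 → ℝ) (hest : ∀ ω, est ω = (Xᵀ * X)⁻¹ *ᵥ (Xᵀ *ᵥ Y ω)) :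
    ∫ ω, (est ω 1 + est ω 2 - ∫ ω', (est ω' 1 + est ω' 2) ∂μ) ^ 2 ∂μ
      ≥ σ ^ 2 / (n * Vρ) :=
  stmt_15_general μ n Z ρ VZ Vρ C hVZdef hVρdef hCdef hVρ hC ε hsq hmean σ hvar hcov α β γ Y hY X hX
    est hest
end
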